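/- Let p be a probability distribution on {0,1}^{2n} and R_p the induced Pauli channel R_p(ρ) = ∑_{(a,b)} p(a,b) XᵃZᵇ ρ Zᵇ Xᵃ. If R_p is ε-randomizing in trace norm, then for every n×2n matrix M over GF(2) representing n independent commuting Pauli generators of a stabilizer state, the distribution of M·V (V distributed as p, M·V the vector of symplectic inner products) is within ℓ₁ distance ε of the uniform distribution on {0,1}ⁿ. -/

import Mathlib

open Matrix ComplexOrder

/-- The trace norm (sum of singular values) of a complex square matrix. -/
noncomputable def traceNorm {n : Type*} [Fintype n] [DecidableEq n] (M : Matrix n n ℂ) : ℝ :=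
  ((Matrix.posSemidef_conjTranspose_mul_self M).1.eigenvectorUnitary.1 *
    diagonal (((↑) : ℝ → ℂ) ∘ (Real.sqrt ∘ (Matrix.posSemidef_conjTranspose_mul_self M).1.eigenvalues)) *
    (star (Matrix.posSemidef_conjTranspose_mul_self M).1.eigenvectorUnitary :
      Matrix n n ℂ)).trace.re

/-- The Frobenius (Hilbert–Schmidt) norm of a complex square matrix. -/
noncomputable def frobNorm {n : Type*} [Fintype n] (M : Matrix n n ℂ) : ℝ :=
  Real.sqrt ((Mᴴ * M).trace.re)

/-- Mod-2 scalar product data: the number of positions where both bit strings are 1. -/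
def bdot {n : ℕ} (a b : Fin n → Bool) : ℕ :=
  (Finset.univ.filter fun i => a i = true ∧ b i = true).card

/-- `Xᵃ = X^{a₁} ⊗ ⋯ ⊗ X^{aₙ}`: the tensor product of Pauli X's selected by `a`,
as a matrix in the computational basis indexed by `Fin n → Bool`. -/
def XMat {n : ℕ} (a : Fin n → Bool) : Matrix (Fin n → Bool) (Fin n → Bool) ℂ :=
  Matrix.of fun s t => if s = fun i => xor (a i) (t i) then 1 else 0

/-- `Zᵇ = Z^{b₁} ⊗ ⋯ ⊗ Z^{bₙ}`: the tensor product of Pauli Z's selected by `b`. -/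
def ZMat {n : ℕ} (b : Fin n → Bool) : Matrix (Fin n → Bool) (Fin n → Bool) ℂ :=
  Matrix.diagonal fun t => (-1 : ℂ) ^ bdot b t

/-- The symplectic inner product of the `2n`-bit strings `(a,b)` and `(c,d)`:
`⟨a,d⟩ + ⟨b,c⟩ mod 2`. -/
def sympB {n : ℕ} (p q : (Fin n → Bool) × (Fin n → Bool)) : ZMod 2 :=
  ((bdot p.1 q.2 + bdot p.2 q.1 : ℕ) : ZMod 2)

/-- `M·w`: the vector of symplectic inner products of the rows `g k` of the generator
matrix with the string `w`. -/
def Msymp {n : ℕ} (g : Fin n → (Fin n → Bool) × (Fin n → Bool))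
    (w : (Fin n → Bool) × (Fin n → Bool)) : Fin n → ZMod 2 :=
  fun k => sympB (g k) w

/-- The `2n`-bit string `(a,b)` viewed as a vector over `GF(2)`. -/
def toRow {n : ℕ} (q : (Fin n → Bool) × (Fin n → Bool)) :
    (Fin n → ZMod 2) × (Fin n → ZMod 2) :=
  ((fun i => if q.1 i then 1 else 0), (fun i => if q.2 i then 1 else 0))

/-!
Test the channel on the stabilizer state `Π₀` of the commuting generators `g k` (each made
Hermitian by the phase `i^{a·b}`). With `S v` the product of the generators selected by `v`, the
syndrome projectors `Πₓ = 2⁻ⁿ ∑ᵥ (-1)^{x·v} S v` are orthogonal projections summing to `1`, each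
of trace `1` because `tr (S v) = 0` for `v ≠ 0`: by independence some Pauli error anticommutes
with `S v`. The error `XᵃZᵇ` commutes or anticommutes with each `g k` according to the syndrome
`M (a, b)`, so it conjugates `Π₀` into `Π_{M (a, b)}`, and therefore
`R_p(Π₀) − I/2ⁿ = ∑ₓ (Pr[M V = x] − 2⁻ⁿ) Πₓ`. Pinching by the `Πₓ` bounds the trace norm of this
matrix from below by `∑ₓ |Pr[M V = x] − 2⁻ⁿ|`, since `|tr (Πₓ A)| ≤ tr (Πₓ |A|)` for Hermitian `A`.
-/

namespace Finset

variable {ι : Type*}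

lemma isSelfAdjoint_noncommProd {R : Type*} [Monoid R] [StarMul R] (s : Finset ι) (f : ι → R)
    (comm) (hf : ∀ i ∈ s, IsSelfAdjoint (f i)) : IsSelfAdjoint (s.noncommProd f comm) := by
  induction s using Finset.cons_induction with
  | empty => simp
  | cons i s hi ih =>
    rw [noncommProd_cons]
    have hs := ih (comm.mono fun _ => mem_cons_of_mem) fun j hj => hf j (mem_cons_of_mem hj)
    refine ((hf i (mem_cons_self i s)).commute_iff hs).mp
      (noncommProd_commute _ _ _ _ fun j hj => comm (mem_cons_self i s) (mem_cons_of_mem hj) ?_)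
    rintro rfl
    exact hi hj

lemma mul_noncommProd_eq_smul {R A : Type*} [CommMonoid R] [Monoid A] [MulAction R A]
    [IsScalarTower R A A] [SMulCommClass R A A] (s : Finset ι) (f : ι → A) (comm) {a : A}
    {c : ι → R} (h : ∀ i ∈ s, a * f i = c i • (f i * a)) :
    a * s.noncommProd f comm = (∏ i ∈ s, c i) • (s.noncommProd f comm * a) := by
  induction s using Finset.cons_induction with
  | empty => simp
  | cons i s hi ih =>
    rw [noncommProd_cons, prod_cons, ← mul_assoc, h i (mem_cons_self i s), smul_mul_assoc,
      mul_assoc, ih _ fun j hj => h j (mem_cons_of_mem hj), mul_smul_comm, smul_smul, mul_assoc]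

end Finset

namespace PauliSyndrome

section TraceNorm

variable {m : Type*} [Fintype m] [DecidableEq m]

open scoped MatrixOrder

lemma traceNorm_eq_re_trace_abs (A : Matrix m m ℂ) : traceNorm A = (CFC.abs A).trace.re := by
  have hA := posSemidef_conjTranspose_mul_self A
  rw [CFC.abs, star_eq_conjTranspose, CFC.sqrt_eq_real_sqrt _ hA.nonneg,
    cfcₙ_eq_cfc (hf0 := Real.sqrt_zero), hA.1.cfc_eq]
  rfl

lemma trace_mul_nonneg {P Q : Matrix m m ℂ} (hP : P.PosSemidef) (hQ : Q.PosSemidef) :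
    0 ≤ (P * Q).trace := by
  have hsqrt : (CFC.sqrt P)ᴴ = CFC.sqrt P := (CFC.sqrt_nonneg P).isSelfAdjoint.star_eq
  rw [← CFC.sqrt_mul_sqrt_self P hP.nonneg, mul_assoc, trace_mul_comm]
  simpa only [hsqrt] using (hQ.mul_mul_conjTranspose_same (CFC.sqrt P)).trace_nonneg

lemma sum_abs_re_trace_mul_le_traceNorm {ι : Type*} [Fintype ι] {A : Matrix m m ℂ}
    (hA : A.IsHermitian) {Q : ι → Matrix m m ℂ} (hQ : ∀ i, (Q i).PosSemidef)
    (hQ1 : ∑ i, Q i = 1) : ∑ i, |(Q i * A).trace.re| ≤ traceNorm A := by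
  have habs_sub : (CFC.abs A - A).PosSemidef := by
    rw [← nonneg_iff_posSemidef, CFC.abs_sub_self A hA]
    exact smul_nonneg zero_le_two (CFC.negPart_nonneg A)
  have habs_add : (CFC.abs A + A).PosSemidef := by
    rw [← nonneg_iff_posSemidef, CFC.abs_add_self A hA]
    exact smul_nonneg zero_le_two (CFC.posPart_nonneg A)
  have hbound : ∀ i, |(Q i * A).trace.re| ≤ (Q i * CFC.abs A).trace.re := by
    intro i
    have h₁ := Complex.nonneg_iff.mp (trace_mul_nonneg (hQ i) habs_sub) |>.1
    have h₂ := Complex.nonneg_iff.mp (trace_mul_nonneg (hQ i) habs_add) |>.1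
    rw [mul_sub, trace_sub, Complex.sub_re] at h₁
    rw [mul_add, trace_add, Complex.add_re] at h₂
    exact abs_le.mpr ⟨by linarith, by linarith⟩
  calc ∑ i, |(Q i * A).trace.re|
      ≤ ∑ i, (Q i * CFC.abs A).trace.re := Finset.sum_le_sum fun i _ => hbound i
    _ = traceNorm A := by
      rw [← Complex.re_sum, ← trace_sum, ← Finset.sum_mul, hQ1, one_mul,
        traceNorm_eq_re_trace_abs]

lemma sum_abs_le_traceNorm_sum_smul {ι : Type*} [Fintype ι] [DecidableEq ι]
    {Q : ι → Matrix m m ℂ} (hQ : ∀ i, (Q i).PosSemidef) (hQ1 : ∑ i, Q i = 1)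
    (hQQ : ∀ i j, Q i * Q j = if i = j then Q i else 0) (htr : ∀ i, (Q i).trace = 1)
    (r : ι → ℝ) : ∑ i, |r i| ≤ traceNorm (∑ i, (r i : ℂ) • Q i) := by
  have hA : (∑ i, (r i : ℂ) • Q i).IsHermitian := by
    simp [IsHermitian, conjTranspose_sum, conjTranspose_smul, fun i => (hQ i).isHermitian.eq]
  have htrace : ∀ i, (Q i * ∑ j, (r j : ℂ) • Q j).trace.re = r i := by
    simp [Finset.mul_sum, hQQ, htr]
  simpa only [htrace] using sum_abs_re_trace_mul_le_traceNorm hA hQ hQ1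

end TraceNorm

def signChar : AddChar (ZMod 2) ℂ where
  toFun m := (-1) ^ m.val
  map_zero_eq_one' := by simp
  map_add_eq_mul' a b := by rw [← pow_add, ZMod.val_add, ← neg_one_pow_eq_pow_mod_two]

lemma signChar_natCast (m : ℕ) : signChar m = (-1) ^ m := by
  rw [neg_one_pow_eq_pow_mod_two, ← ZMod.val_natCast]
  rfl

@[simp] lemma signChar_one : signChar 1 = -1 := by
  simpa using signChar_natCast 1

@[simp] lemma star_signChar (m : ZMod 2) : star (signChar m) = signChar m := by
  simp [signChar]

lemma signChar_eq_one_iff (m : ZMod 2) : signChar m = 1 ↔ m = 0 := by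
  obtain rfl | rfl : m = 0 ∨ m = 1 := by revert m; decide
  · simp
  · norm_num

lemma signChar_sum {κ : Type*} (s : Finset κ) (f : κ → ZMod 2) :
    signChar (∑ i ∈ s, f i) = ∏ i ∈ s, signChar (f i) := by
  induction s using Finset.cons_induction with
  | empty => simp
  | cons i s hi ih => rw [Finset.sum_cons, Finset.prod_cons, AddChar.map_add_eq_mul, ih]

lemma signChar_mul_self (m : ZMod 2) : signChar m * signChar m = 1 := by
  rw [← AddChar.map_add_eq_mul, CharTwo.add_self_eq_zero, AddChar.map_zero_eq_one]

section Fourier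

variable {ι : Type*} [Fintype ι] [DecidableEq ι]

lemma sum_signChar_dotProduct (z : ι → ZMod 2) :
    ∑ v, signChar (z ⬝ᵥ v) = if z = 0 then 2 ^ Fintype.card ι else 0 := by
  let ψ : AddChar (ι → ZMod 2) ℂ :=
    signChar.compAddMonoidHom (dotProductBilin (ZMod 2) (ZMod 2) z).toAddMonoidHom
  have hψ : ψ = 0 ↔ z = 0 := by
    refine ⟨fun h => funext fun k => ?_, fun h => ?_⟩
    · have := AddChar.eq_zero_iff.mp h (Pi.single k 1)
      simpa [ψ, dotProduct_single, signChar_eq_one_iff] using this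
    · subst h
      ext v
      simp [ψ]
  have := AddChar.sum_eq_ite ψ
  simp only [hψ] at this
  simpa [ψ] using this

variable {A : Type*} [Ring A] [Algebra ℂ A] (S : (ι → ZMod 2) → A)

noncomputable def fourierProj (x : ι → ZMod 2) : A :=
  ((2 : ℂ) ^ Fintype.card ι)⁻¹ • ∑ v, signChar (x ⬝ᵥ v) • S v

variable {S}

lemma mul_fourierProj (hS : ∀ v w, S (v + w) = S v * S w) (w y : ι → ZMod 2) :
    S w * fourierProj S y = signChar (y ⬝ᵥ w) • fourierProj S y := by
  simp only [fourierProj, mul_smul_comm, Finset.mul_sum, Finset.smul_sum]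
  refine Fintype.sum_equiv (Equiv.addLeft w) _ _ fun v => ?_
  rw [Equiv.coe_addLeft, hS, dotProduct_add, AddChar.map_add_eq_mul, smul_smul, smul_smul,
    smul_smul]
  congr 1
  linear_combination -((2 : ℂ) ^ Fintype.card ι)⁻¹ * signChar (y ⬝ᵥ v) *
    signChar_mul_self (y ⬝ᵥ w)

lemma fourierProj_mul_fourierProj (hS : ∀ v w, S (v + w) = S v * S w) (x y : ι → ZMod 2) :
    fourierProj S x * fourierProj S y = if x = y then fourierProj S x else 0 := by
  have hxy : x + y = 0 ↔ x = y := by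
    simp only [funext_iff, Pi.add_apply, Pi.zero_apply, CharTwo.add_eq_zero]
  conv_lhs => rw [fourierProj]
  simp only [smul_mul_assoc, Finset.sum_mul, mul_fourierProj hS, smul_smul, ← Finset.sum_smul,
    ← AddChar.map_add_eq_mul, ← add_dotProduct, sum_signChar_dotProduct, hxy]
  split_ifs with h
  · subst h
    rw [inv_mul_cancel₀ (by simp), one_smul]
  · simp

lemma sum_fourierProj (hS0 : S 0 = 1) : ∑ x, fourierProj S x = 1 := by
  simp only [fourierProj, ← Finset.smul_sum]
  rw [Finset.sum_comm]
  simp only [← Finset.sum_smul, dotProduct_comm _ (_ : ι → ZMod 2), sum_signChar_dotProduct,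
    ite_smul, zero_smul, Finset.sum_ite_eq', Finset.mem_univ, if_true, hS0, smul_smul]
  rw [inv_mul_cancel₀ (by simp), one_smul]

lemma mul_fourierProj_mul {U V : A} {y : ι → ZMod 2}
    (hUV : ∀ v, U * S v * V = signChar (y ⬝ᵥ v) • S v) (x : ι → ZMod 2) :
    U * fourierProj S x * V = fourierProj S (x + y) := by
  simp only [fourierProj, mul_smul_comm, smul_mul_assoc, Finset.mul_sum, Finset.sum_mul, hUV,
    smul_smul, add_dotProduct, AddChar.map_add_eq_mul]

lemma isSelfAdjoint_fourierProj [StarRing A] [StarModule ℂ A] (hS : ∀ v, IsSelfAdjoint (S v))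
    (x : ι → ZMod 2) : IsSelfAdjoint (fourierProj S x) := by
  simp only [IsSelfAdjoint, fourierProj, star_smul, star_sum, (hS _).star_eq, star_signChar]
  simp

lemma trace_fourierProj {m : Type*} [Fintype m] [DecidableEq m]
    {S : (ι → ZMod 2) → Matrix m m ℂ} (hS0 : S 0 = 1) (htr : ∀ v ≠ 0, (S v).trace = 0)
    (x : ι → ZMod 2) : (fourierProj S x).trace = Fintype.card m / 2 ^ Fintype.card ι := by
  rw [fourierProj, trace_smul, trace_sum, Finset.sum_eq_single 0
    (fun v _ hv => by rw [trace_smul, htr v hv, smul_zero]) (by simp)]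
  simp [hS0, div_eq_inv_mul]

end Fourier

variable {n : ℕ}

def bxor (a b : Fin n → Bool) : Fin n → Bool := fun i => xor (a i) (b i)

lemma bdot_comm (a b : Fin n → Bool) : bdot a b = bdot b a := by
  simp only [bdot, and_comm]

lemma neg_one_pow_bdot_bxor (b x y : Fin n → Bool) :
    (-1 : ℂ) ^ bdot b (bxor x y) = (-1) ^ bdot b x * (-1) ^ bdot b y := by
  simp only [bdot, ← Finset.prod_const, Finset.prod_filter, ← Finset.prod_mul_distrib]
  refine Finset.prod_congr rfl fun i _ => ?_
  cases b i <;> cases hx : x i <;> cases hy : y i <;> simp [bxor, hx, hy]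

lemma eq_bxor_comm (a s t : Fin n → Bool) : s = bxor a t ↔ t = bxor a s := by
  constructor <;> rintro rfl <;> funext i <;> simp [bxor]

lemma XMat_apply (a s t : Fin n → Bool) : XMat a s t = if t = bxor a s then (1 : ℂ) else 0 :=
  if_congr (eq_bxor_comm a s t) rfl rfl

lemma XMat_mul_XMat (a c : Fin n → Bool) :
    XMat a * XMat c = (XMat (bxor a c) : Matrix _ _ ℂ) := by
  ext s t
  have hassoc : bxor c (bxor a s) = bxor (bxor a c) s := by
    funext i
    simp only [bxor, Bool.xor_left_comm (c i), Bool.xor_assoc]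
  simp only [mul_apply, XMat_apply, ite_mul, one_mul, zero_mul, Finset.sum_ite_eq',
    Finset.mem_univ, if_true, hassoc]

lemma XMat_mul_self (a : Fin n → Bool) : XMat a * XMat a = (1 : Matrix _ _ ℂ) := by
  have hself : ∀ s, bxor (bxor a a) s = s := fun s => funext fun i => by simp [bxor]
  ext s t
  rw [XMat_mul_XMat, XMat_apply, hself, one_apply]
  exact if_congr eq_comm rfl rfl

lemma XMat_commute (a c : Fin n → Bool) : Commute (XMat a : Matrix _ _ ℂ) (XMat c) := by
  have : bxor a c = bxor c a := funext fun i => Bool.xor_comm _ _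
  rw [Commute, SemiconjBy, XMat_mul_XMat, XMat_mul_XMat, this]

lemma ZMat_mul_self (b : Fin n → Bool) : ZMat b * ZMat b = (1 : Matrix _ _ ℂ) := by
  simp [ZMat, ← mul_pow]

lemma ZMat_commute (b d : Fin n → Bool) : Commute (ZMat b) (ZMat d) := by
  rw [Commute, SemiconjBy, ZMat, ZMat, diagonal_mul_diagonal, diagonal_mul_diagonal]
  simp only [mul_comm]

lemma ZMat_mul_XMat (b a : Fin n → Bool) :
    ZMat b * XMat a = (-1 : ℂ) ^ bdot b a • (XMat a * ZMat b) := by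
  ext s t
  simp only [ZMat, diagonal_mul, mul_diagonal, Matrix.smul_apply, XMat_apply, smul_eq_mul]
  split_ifs with h
  · rw [(eq_bxor_comm a s t).mpr h, neg_one_pow_bdot_bxor]
    ring
  · simp

lemma XMat_isHermitian (a : Fin n → Bool) : (XMat a : Matrix _ _ ℂ).IsHermitian := by
  ext s t
  simp only [conjTranspose_apply, XMat_apply, eq_bxor_comm a s t]
  split_ifs <;> simp

lemma ZMat_isHermitian (b : Fin n → Bool) : (ZMat b).IsHermitian := by
  rw [IsHermitian, ZMat, diagonal_conjTranspose]
  simp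

def pauliXZ (q : (Fin n → Bool) × (Fin n → Bool)) : Matrix (Fin n → Bool) (Fin n → Bool) ℂ :=
  XMat q.1 * ZMat q.2

lemma pauliXZ_mul_pauliXZ (q s : (Fin n → Bool) × (Fin n → Bool)) :
    pauliXZ q * pauliXZ s =
      (-1 : ℂ) ^ bdot q.2 s.1 • (XMat q.1 * XMat s.1 * (ZMat q.2 * ZMat s.2)) := by
  rw [pauliXZ, pauliXZ, mul_assoc, ← mul_assoc (ZMat q.2), ZMat_mul_XMat, smul_mul_assoc,
    mul_smul_comm, mul_assoc, mul_assoc]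

lemma pauliXZ_mul_comm (q s : (Fin n → Bool) × (Fin n → Bool)) :
    pauliXZ q * pauliXZ s = signChar (sympB s q) • (pauliXZ s * pauliXZ q) := by
  rw [pauliXZ_mul_pauliXZ, pauliXZ_mul_pauliXZ, (XMat_commute _ _).eq, (ZMat_commute _ _).eq,
    smul_smul, sympB, signChar_natCast]
  congr 1
  rw [bdot_comm q.2, pow_add, mul_assoc, ← pow_add, Even.neg_one_pow ⟨_, rfl⟩, mul_one]

lemma conjTranspose_pauliXZ (q : (Fin n → Bool) × (Fin n → Bool)) :
    (pauliXZ q)ᴴ = ZMat q.2 * XMat q.1 := by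
  rw [pauliXZ, conjTranspose_mul, (XMat_isHermitian _).eq, (ZMat_isHermitian _).eq]

lemma pauliXZ_mul_conjTranspose (q : (Fin n → Bool) × (Fin n → Bool)) :
    pauliXZ q * (pauliXZ q)ᴴ = 1 := by
  rw [conjTranspose_pauliXZ, pauliXZ, mul_assoc, ← mul_assoc (ZMat q.2), ZMat_mul_self, one_mul,
    XMat_mul_self]

lemma conjTranspose_mul_pauliXZ (q : (Fin n → Bool) × (Fin n → Bool)) :
    (pauliXZ q)ᴴ * pauliXZ q = 1 := by
  rw [conjTranspose_pauliXZ, pauliXZ, mul_assoc, ← mul_assoc (XMat q.1), XMat_mul_self, one_mul,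
    ZMat_mul_self]

-- `(XᵃZᵇ)ᴴ = (-1)^{a·b} XᵃZᵇ`, so the phase `i^{a·b}` makes it Hermitian.
noncomputable def hermPauli (q : (Fin n → Bool) × (Fin n → Bool)) :
    Matrix (Fin n → Bool) (Fin n → Bool) ℂ :=
  Complex.I ^ bdot q.1 q.2 • pauliXZ q

lemma hermPauli_isHermitian (q : (Fin n → Bool) × (Fin n → Bool)) :
    (hermPauli q).IsHermitian := by
  rw [IsHermitian, hermPauli, conjTranspose_smul, conjTranspose_pauliXZ, ZMat_mul_XMat,
    bdot_comm, ← pauliXZ, smul_smul, star_pow, Complex.star_def, Complex.conj_I, ← mul_pow]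
  norm_num

lemma hermPauli_mul_self (q : (Fin n → Bool) × (Fin n → Bool)) :
    hermPauli q * hermPauli q = 1 := by
  rw [hermPauli, smul_mul_smul_comm, pauliXZ_mul_pauliXZ, XMat_mul_self, ZMat_mul_self, one_mul,
    smul_smul, ← mul_pow, Complex.I_mul_I, bdot_comm, ← pow_add, Even.neg_one_pow ⟨_, rfl⟩,
    one_smul]

lemma hermPauli_commute {s t : (Fin n → Bool) × (Fin n → Bool)} (h : sympB s t = 0) :
    Commute (hermPauli s) (hermPauli t) := by
  have : Commute (pauliXZ s) (pauliXZ t) := by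
    rw [Commute, SemiconjBy, pauliXZ_mul_comm t s, h, AddChar.map_zero_eq_one, one_smul]
  exact (this.smul_left _).smul_right _

lemma pauliXZ_mul_hermPauli (q s : (Fin n → Bool) × (Fin n → Bool)) :
    pauliXZ q * hermPauli s = signChar (sympB s q) • (hermPauli s * pauliXZ q) := by
  rw [hermPauli, mul_smul_comm, pauliXZ_mul_comm, smul_mul_assoc, smul_comm]

lemma bdot_indicator (a : Fin n → Bool) (j : Fin n) :
    bdot a (fun i => decide (i = j)) = if a j then 1 else 0 := by
  simp only [bdot, decide_eq_true_eq, Finset.filter_and, Finset.filter_eq', Finset.mem_univ,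
    if_true]
  by_cases h : a j <;> simp [h]

@[simp] lemma bdot_false (a : Fin n → Bool) : bdot a (fun _ => false) = 0 := by
  simp [bdot]

lemma toRow_fst_apply_eq_sympB (q : (Fin n → Bool) × (Fin n → Bool)) (j : Fin n) :
    (toRow q).1 j = sympB q (fun _ => false, fun i => decide (i = j)) := by
  simp only [toRow, sympB, bdot_indicator, bdot_false, add_zero]
  split_ifs <;> simp

lemma toRow_snd_apply_eq_sympB (q : (Fin n → Bool) × (Fin n → Bool)) (j : Fin n) :
    (toRow q).2 j = sympB q (fun i => decide (i = j), fun _ => false) := by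
  simp only [toRow, sympB, bdot_indicator, bdot_false, zero_add]
  split_ifs <;> simp

variable (g : Fin n → (Fin n → Bool) × (Fin n → Bool))

lemma exists_Msymp_dotProduct_eq_one (hindep : LinearIndependent (ZMod 2) fun k => toRow (g k))
    {v : Fin n → ZMod 2} (hv : v ≠ 0) : ∃ q, Msymp g q ⬝ᵥ v = 1 := by
  set w := ∑ k, v k • toRow (g k)
  have hw : w ≠ 0 := fun h => hv (funext (Fintype.linearIndependent_iff.mp hindep v h))
  have h_eq_one : ∀ x : ZMod 2, x ≠ 0 → x = 1 := by decide
  obtain ⟨j, hj⟩ | ⟨j, hj⟩ : (∃ j, w.1 j ≠ 0) ∨ ∃ j, w.2 j ≠ 0 := by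
    by_contra! h
    exact hw (Prod.ext (funext h.1) (funext h.2))
  · refine ⟨(fun _ => false, fun i => decide (i = j)), ?_⟩
    rw [← h_eq_one _ hj]
    simp [w, Msymp, dotProduct, Prod.fst_sum, toRow_fst_apply_eq_sympB, mul_comm]
  · refine ⟨(fun i => decide (i = j), fun _ => false), ?_⟩
    rw [← h_eq_one _ hj]
    simp [w, Msymp, dotProduct, Prod.snd_sum, toRow_snd_apply_eq_sympB, mul_comm]

section Stabilizer

lemma pairwise_commute_hermPauli_pow (hg : ∀ k l, sympB (g k) (g l) = 0)
    (v : Fin n → ZMod 2) :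
    (↑(Finset.univ : Finset (Fin n)) : Set (Fin n)).Pairwise
      (Function.onFun Commute fun k => hermPauli (g k) ^ (v k).val) :=
  fun k _ l _ _ => (hermPauli_commute (hg k l)).pow_pow _ _

variable (hg : ∀ k l, sympB (g k) (g l) = 0)

noncomputable def stabilizer (v : Fin n → ZMod 2) : Matrix (Fin n → Bool) (Fin n → Bool) ℂ :=
  Finset.univ.noncommProd (fun k => hermPauli (g k) ^ (v k).val)
    (pairwise_commute_hermPauli_pow g hg v)

lemma stabilizer_zero : stabilizer g hg 0 = 1 := by
  rw [stabilizer, Finset.noncommProd_eq_pow_card _ _ _ 1 (by simp), one_pow]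

lemma stabilizer_add (v w : Fin n → ZMod 2) :
    stabilizer g hg (v + w) = stabilizer g hg v * stabilizer g hg w := by
  rw [stabilizer, stabilizer, stabilizer, ← Finset.noncommProd_mul_distrib]
  · refine Finset.noncommProd_congr rfl (fun k _ => ?_) _
    rw [Pi.mul_apply, ← pow_add, Pi.add_apply, ZMod.val_add,
      ← pow_eq_pow_mod _ (pow_two (hermPauli (g k)) ▸ hermPauli_mul_self (g k))]
  · exact fun k _ l _ _ => (hermPauli_commute (hg k l)).pow_pow _ _

lemma stabilizer_isHermitian (v : Fin n → ZMod 2) : (stabilizer g hg v).IsHermitian :=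
  Finset.isSelfAdjoint_noncommProd _ _ _ fun k _ => (hermPauli_isHermitian (g k)).pow _

lemma pauliXZ_mul_stabilizer (q : (Fin n → Bool) × (Fin n → Bool)) (v : Fin n → ZMod 2) :
    pauliXZ q * stabilizer g hg v =
      signChar (Msymp g q ⬝ᵥ v) • (stabilizer g hg v * pauliXZ q) := by
  have hslide : ∀ k, pauliXZ q * hermPauli (g k) ^ (v k).val =
      signChar (Msymp g q k * v k) • (hermPauli (g k) ^ (v k).val * pauliXZ q) := by
    intro k
    obtain h | h : v k = 0 ∨ v k = 1 := by generalize v k = x; revert x; decide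
    · simp [h]
    · simpa [h, Msymp, show (1 : ZMod 2).val = 1 from rfl] using
        pauliXZ_mul_hermPauli q (g k)
  rw [stabilizer, Finset.mul_noncommProd_eq_smul _ _ _ fun k _ => hslide k, dotProduct,
    signChar_sum]

lemma pauliXZ_mul_stabilizer_mul_conjTranspose (q : (Fin n → Bool) × (Fin n → Bool))
    (v : Fin n → ZMod 2) :
    pauliXZ q * stabilizer g hg v * (pauliXZ q)ᴴ =
      signChar (Msymp g q ⬝ᵥ v) • stabilizer g hg v := by
  rw [pauliXZ_mul_stabilizer, smul_mul_assoc, mul_assoc, pauliXZ_mul_conjTranspose, mul_one]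

lemma trace_stabilizer (hindep : LinearIndependent (ZMod 2) fun k => toRow (g k))
    {v : Fin n → ZMod 2} (hv : v ≠ 0) : (stabilizer g hg v).trace = 0 := by
  obtain ⟨q, hq⟩ := exists_Msymp_dotProduct_eq_one g hindep hv
  have h := congrArg trace (pauliXZ_mul_stabilizer_mul_conjTranspose g hg q v)
  rw [trace_mul_cycle, conjTranspose_mul_pauliXZ, one_mul, hq, signChar_one, trace_smul,
    neg_one_smul] at h
  exact self_eq_neg.mp h

-- The joint eigenprojection of the `hermPauli (g k)` for the eigenvalues `(-1)^{x k}`;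
-- `x = 0` gives the stabilizer state.
noncomputable def syndromeProj (x : Fin n → ZMod 2) : Matrix (Fin n → Bool) (Fin n → Bool) ℂ :=
  fourierProj (stabilizer g hg) x

lemma syndromeProj_mul_syndromeProj (x y : Fin n → ZMod 2) :
    syndromeProj g hg x * syndromeProj g hg y = if x = y then syndromeProj g hg x else 0 :=
  fourierProj_mul_fourierProj (stabilizer_add g hg) x y

lemma sum_syndromeProj : ∑ x, syndromeProj g hg x = 1 :=
  sum_fourierProj (stabilizer_zero g hg)

lemma posSemidef_syndromeProj (x : Fin n → ZMod 2) : (syndromeProj g hg x).PosSemidef := by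
  have hherm : (syndromeProj g hg x).IsHermitian :=
    isSelfAdjoint_fourierProj (stabilizer_isHermitian g hg) x
  have h := posSemidef_conjTranspose_mul_self (syndromeProj g hg x)
  rwa [hherm.eq, syndromeProj_mul_syndromeProj, if_pos rfl] at h

lemma trace_syndromeProj (hindep : LinearIndependent (ZMod 2) fun k => toRow (g k))
    (x : Fin n → ZMod 2) : (syndromeProj g hg x).trace = 1 := by
  rw [syndromeProj, trace_fourierProj (stabilizer_zero g hg)
    (fun v hv => trace_stabilizer g hg hindep hv)]
  simp

lemma conj_syndromeProj_zero (q : (Fin n → Bool) × (Fin n → Bool)) :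
    XMat q.1 * ZMat q.2 * syndromeProj g hg 0 * (ZMat q.2 * XMat q.1) =
      syndromeProj g hg (Msymp g q) := by
  rw [← conjTranspose_pauliXZ, ← pauliXZ, syndromeProj,
    mul_fourierProj_mul (pauliXZ_mul_stabilizer_mul_conjTranspose g hg q), zero_add, syndromeProj]

def syndromeDist (p : (Fin n → Bool) × (Fin n → Bool) → ℝ) (x : Fin n → ZMod 2) : ℝ :=
  ∑ ab ∈ Finset.univ.filter fun ab => Msymp g ab = x, p ab

lemma pauliChannel_syndromeProj_zero_sub (p : (Fin n → Bool) × (Fin n → Bool) → ℝ) :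
    ∑ ab : (Fin n → Bool) × (Fin n → Bool),
        (p ab : ℂ) • (XMat ab.1 * ZMat ab.2 * syndromeProj g hg 0 * (ZMat ab.2 * XMat ab.1))
        - ((2 : ℂ) ^ n)⁻¹ • 1 =
      ∑ x, ((syndromeDist g p x - ((2 : ℝ) ^ n)⁻¹ : ℝ) : ℂ) • syndromeProj g hg x := by
  simp only [conj_syndromeProj_zero]
  rw [← sum_syndromeProj g hg, Finset.smul_sum,
    ← Finset.sum_fiberwise Finset.univ (Msymp g), ← Finset.sum_sub_distrib]
  refine Finset.sum_congr rfl fun x _ => ?_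
  rw [syndromeDist, Complex.ofReal_sub, sub_smul, Complex.ofReal_sum, Finset.sum_smul]
  push_cast
  congr 1
  exact Finset.sum_congr rfl fun ab hab => by rw [(Finset.mem_filter.mp hab).2]

end Stabilizer

end PauliSyndrome

theorem randomizing_implies_syndrome_close_to_uniform_general (n : ℕ) (ε : ℝ)
    (p : (Fin n → Bool) × (Fin n → Bool) → ℝ)
    (hrand : ∀ ρ : Matrix (Fin n → Bool) (Fin n → Bool) ℂ, ρ.PosSemidef → ρ.trace = 1 →
      traceNorm ((∑ ab : (Fin n → Bool) × (Fin n → Bool),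
          (p ab : ℂ) • (XMat ab.1 * ZMat ab.2 * ρ * (ZMat ab.2 * XMat ab.1)))
        - ((2 : ℂ) ^ n)⁻¹ • 1) ≤ ε)
    (g : Fin n → (Fin n → Bool) × (Fin n → Bool))
    (hcomm : ∀ k l, sympB (g k) (g l) = 0)
    (hindep : LinearIndependent (ZMod 2) fun k => toRow (g k)) :
    ∑ x : Fin n → ZMod 2,
        |(∑ ab ∈ Finset.univ.filter fun ab => Msymp g ab = x, p ab) - ((2 : ℝ) ^ n)⁻¹|
      ≤ ε :=
  open PauliSyndrome in by
  calc _ ≤ traceNorm (∑ x, ((syndromeDist g p x - ((2 : ℝ) ^ n)⁻¹ : ℝ) : ℂ) •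
          syndromeProj g hcomm x) :=
        sum_abs_le_traceNorm_sum_smul (posSemidef_syndromeProj g hcomm) (sum_syndromeProj g hcomm)
          (syndromeProj_mul_syndromeProj g hcomm) (trace_syndromeProj g hcomm hindep) _
    _ ≤ ε := pauliChannel_syndromeProj_zero_sub g hcomm p ▸
          hrand _ (posSemidef_syndromeProj g hcomm 0) (trace_syndromeProj g hcomm hindep 0)

theorem randomizing_implies_syndrome_close_to_uniform (n : ℕ) (ε : ℝ)
    (p : (Fin n → Bool) × (Fin n → Bool) → ℝ)
    (hp0 : ∀ ab, 0 ≤ p ab) (hp1 : ∑ ab, p ab = 1)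
    (hrand : ∀ ρ : Matrix (Fin n → Bool) (Fin n → Bool) ℂ, ρ.PosSemidef → ρ.trace = 1 →
      traceNorm ((∑ ab : (Fin n → Bool) × (Fin n → Bool),
          (p ab : ℂ) • (XMat ab.1 * ZMat ab.2 * ρ * (ZMat ab.2 * XMat ab.1)))
        - ((2 : ℂ) ^ n)⁻¹ • 1) ≤ ε)
    (g : Fin n → (Fin n → Bool) × (Fin n → Bool))
    (hcomm : ∀ k l, sympB (g k) (g l) = 0)
    (hindep : LinearIndependent (ZMod 2) fun k => toRow (g k)) :
    ∑ x : Fin n → ZMod 2,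
        |(∑ ab ∈ Finset.univ.filter fun ab => Msymp g ab = x, p ab) - ((2 : ℝ) ^ n)⁻¹|
      ≤ ε :=
  randomizing_implies_syndrome_close_to_uniform_general n ε p hrand g hcomm hindep
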